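/- Let A, B, X be n×n complex matrices with A and B positive definite, let λ₁,…,λₙ be the eigenvalues of A and ν₁,…,νₙ the eigenvalues of B, and set K̲ = min{ K((λᵢ/νⱼ)^{1/2}, 2) : i, j = 1,…,n }. If 0 < v ≤ 1/2, then ‖(1 − v)AX + vXB‖_F² − v²‖AX − XB‖_F² ≥ r₁‖A^{1/2} X B^{1/2} − AX‖_F² + K̲^{r̂₁} ‖A^{1−v} X B^{v}‖_F², where r = min{v, 1 − v}, r₁ = min{2r, 1 − 2r} and r̂₁ = min{2r₁, 1 − 2r₁}. -/

import Mathlib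

/-!
Diagonalise `A = U D U*`, `B = W E W*` and put `Y = U* X W`. Every matrix in the inequality is
`U (F ∘ Y) W*` for a real Schur multiplier `F i j` built from `a = λᵢ` and `b = νⱼ`, and the
Frobenius norm is unitarily invariant, so the inequality is a sum over `(i, j)` of scalar
inequalities weighted by `|Yᵢⱼ|²`.

For the scalar inequality put `p = a`, `q = √a √b`. Then
`((1 - v) a + v b)² - v² (a - b)² = (1 - 2v) p² + 2v q²` is a weighted arithmetic mean of `p²`
and `q²`; subtracting `r₁ (p - q)²` leaves a weighted mean of `p²` and `pq` (or of `pq` and `q²`),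
and the Kantorovich form of Young's inequality,
`(1 - s) x + s y ≥ K(y / x, 2) ^ min(s, 1 - s) · x ^ (1 - s) y ^ s`, bounds that mean from below
by `K(√(b / a), 2) ^ r̂₁ (a ^ (1 - v) b ^ v)²`. Young's inequality itself follows from
`K(h, 2) · h = ((1 + h) / 2)²` and Bernoulli's inequality.
-/

open Matrix
open scoped ComplexOrder

/-- Real power of a matrix, defined for Hermitian matrices via the spectral
decomposition (functional calculus); junk value otherwise. -/
noncomputable def mrpow {n : ℕ} (A : Matrix (Fin n) (Fin n) ℂ) (t : ℝ) :
    Matrix (Fin n) (Fin n) ℂ :=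
  if h : A.IsHermitian then
    (h.eigenvectorUnitary : Matrix (Fin n) (Fin n) ℂ)
      * Matrix.diagonal (fun i => ((h.eigenvalues i ^ t : ℝ) : ℂ))
      * star (h.eigenvectorUnitary : Matrix (Fin n) (Fin n) ℂ)
  else A

/-- The squared Hilbert-Schmidt (Frobenius) norm `‖A‖_F^2`. -/
noncomputable def frobSq {n : ℕ} (A : Matrix (Fin n) (Fin n) ℂ) : ℝ :=
  ∑ i : Fin n, ∑ j : Fin n, ‖A i j‖ ^ 2

/-- The Kantorovich constant `K(t, 2) = (t + 1)^2 / (4 t)`. -/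
noncomputable def Kant (t : ℝ) : ℝ := (t + 1) ^ 2 / (4 * t)

lemma one_le_Kant {t : ℝ} (ht : 0 < t) : 1 ≤ Kant t := by
  rw [Kant, le_div_iff₀ (by positivity)]
  nlinarith [sq_nonneg (t - 1)]

lemma Kant_inv (t : ℝ) : Kant t⁻¹ = Kant t := by
  rcases eq_or_ne t 0 with rfl | ht
  · simp [Kant]
  · unfold Kant
    field_simp
    ring

lemma Kant_mul_self {t : ℝ} (ht : t ≠ 0) : Kant t * t = ((t + 1) / 2) ^ 2 := by
  unfold Kant
  field_simp
  ring

lemma Kant_rpow_mul_geom_mean_le_arith_mean {x y s : ℝ} (hx : 0 < x) (hy : 0 < y)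
    (hs₀ : 0 ≤ s) (hs₁ : s ≤ 1) :
    Kant (y / x) ^ min s (1 - s) * (x ^ (1 - s) * y ^ s) ≤ (1 - s) * x + s * y := by
  wlog hs : s ≤ 1 / 2 generalizing x y s
  · have := this hy hx (s := 1 - s) (by linarith) (by linarith) (by linarith)
    rw [← inv_div, Kant_inv, sub_sub_cancel, min_comm] at this
    linarith
  set h := y / x
  have hh : 0 < h := div_pos hy hx
  have hy' : y = x * h := by rw [mul_div_cancel₀ y hx.ne']
  -- `Kant h * h` is the square of the arithmetic mean of `1` and `h`, so Bernoulli applies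
  have bernoulli : Kant h ^ s * h ^ s ≤ 1 - s + s * h := by
    rw [← Real.mul_rpow (by linarith [one_le_Kant hh]) hh.le, Kant_mul_self hh.ne',
      ← Real.rpow_natCast, ← Real.rpow_mul (by positivity), Nat.cast_ofNat,
      show (h + 1) / 2 = 1 + (h - 1) / 2 by ring]
    have := rpow_one_add_le_one_add_mul_self (s := (h - 1) / 2) (by linarith)
      (p := 2 * s) (by linarith) (by linarith)
    linarith
  calc Kant h ^ min s (1 - s) * (x ^ (1 - s) * y ^ s)
      = Kant h ^ s * h ^ s * (x ^ (1 - s) * x ^ s) := by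
        rw [min_eq_left (by linarith), hy', Real.mul_rpow hx.le hh.le]; ring
    _ = Kant h ^ s * h ^ s * x := by rw [← Real.rpow_add hx, sub_add_cancel, Real.rpow_one]
    _ ≤ (1 - s + s * h) * x := by gcongr
    _ = (1 - s) * x + s * y := by rw [hy']; ring

lemma Kant_rpow_mul_geom_mean_le_arith_mean_sub_sq {p q s r : ℝ} (hp : 0 < p) (hq : 0 < q)
    (hs₀ : 0 ≤ s) (hs₁ : s ≤ 1) (hr : r = min s (1 - s)) :
    Kant (q / p) ^ min (2 * r) (1 - 2 * r) * (p ^ (1 - s) * q ^ s) ^ 2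
      ≤ (1 - s) * p ^ 2 + s * q ^ 2 - r * (p - q) ^ 2 := by
  wlog hs : s ≤ 1 / 2 generalizing p q s
  · have := this hq hp (s := 1 - s) (by linarith) (by linarith)
      (by rw [hr, min_comm, sub_sub_cancel]) (by linarith)
    rw [← inv_div, Kant_inv, sub_sub_cancel, mul_comm (q ^ _)] at this
    linarith
  obtain rfl : r = s := by rw [hr, min_eq_left (by linarith)]
  have hgm := Kant_rpow_mul_geom_mean_le_arith_mean (x := p ^ 2) (y := p * q) (s := 2 * r)
    (by positivity) (by positivity) (by linarith) (by linarith)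
  have hratio : p * q / p ^ 2 = q / p := by field_simp
  have hpow : (p ^ 2) ^ (1 - 2 * r) * (p * q) ^ (2 * r) = (p ^ (1 - r) * q ^ r) ^ 2 := by
    rw [Real.mul_rpow hp.le hq.le, ← Real.rpow_pow_comm hp.le, mul_pow,
      ← Real.rpow_mul_natCast hp.le, ← Real.rpow_mul_natCast hp.le,
      ← Real.rpow_mul_natCast hq.le, ← mul_assoc, ← Real.rpow_add hp]
    ring_nf
  rw [hratio, hpow] at hgm
  linarith

lemma Kant_rpow_mul_sq_le_sq_mean_sub_sq {a b v k r₁ rh₁ : ℝ} (ha : 0 < a) (hb : 0 < b)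
    (hv₀ : 0 ≤ v) (hv : v ≤ 1 / 2) (hr₁ : r₁ = min (2 * v) (1 - 2 * v))
    (hrh₁ : rh₁ = min (2 * r₁) (1 - 2 * r₁))
    (hk₀ : 0 ≤ k) (hk : k ≤ Kant (√(a / b))) :
    r₁ * (a ^ (1 / 2 : ℝ) * b ^ (1 / 2 : ℝ) - a) ^ 2 + k ^ rh₁ * (a ^ (1 - v) * b ^ v) ^ 2
      ≤ ((1 - v) * a + v * b) ^ 2 - v ^ 2 * (a - b) ^ 2 := by
  rw [← Real.sqrt_eq_rpow, ← Real.sqrt_eq_rpow]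
  set q := √a * √b
  have hq : 0 < q := by positivity
  have hq2 : q ^ 2 = a * b := by rw [mul_pow, Real.sq_sqrt ha.le, Real.sq_sqrt hb.le]
  have hratio : √(a / b) = (q / a)⁻¹ := by
    have := Real.sqrt_pos.2 ha
    have := Real.sqrt_pos.2 hb
    rw [inv_div, Real.sqrt_div ha.le]
    field_simp
    show √a * (√a * √b) = √b * a
    rw [← mul_assoc, Real.mul_self_sqrt ha.le, mul_comm]
  have hpow : (a ^ (1 - 2 * v) * q ^ (2 * v)) ^ 2 = (a ^ (1 - v) * b ^ v) ^ 2 := by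
    rw [Real.mul_rpow (by positivity) (by positivity), Real.sqrt_eq_rpow, Real.sqrt_eq_rpow,
      ← Real.rpow_mul ha.le, ← Real.rpow_mul hb.le, ← mul_assoc, ← Real.rpow_add ha]
    ring_nf
  have hK := Kant_rpow_mul_geom_mean_le_arith_mean_sub_sq ha hq (s := 2 * v) (by linarith)
    (by linarith) hr₁
  rw [← hrh₁, hpow] at hK
  have hk' : k ^ rh₁ ≤ Kant (q / a) ^ rh₁ := by
    rw [hratio, Kant_inv] at hk
    gcongr
    rw [hrh₁, hr₁]
    grind
  linear_combination mul_le_mul_of_nonneg_right hk' (sq_nonneg (a ^ (1 - v) * b ^ v)) + hK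
    + 2 * v * hq2

lemma sInf_range_Kant_nonneg {ι : Type*} {f : ι → ℝ} (hf : ∀ i, 0 < f i) :
    0 ≤ sInf (Set.range fun i => Kant (f i)) :=
  Real.sInf_nonneg (by
    rintro _ ⟨i, rfl⟩
    exact zero_le_one.trans (one_le_Kant (hf i)))

section Matrix

variable {n : ℕ}

lemma ofReal_frobSq (M : Matrix (Fin n) (Fin n) ℂ) :
    (frobSq M : ℂ) = (Mᴴ * M).trace := by
  simp only [frobSq, Matrix.trace, Matrix.diag, Matrix.mul_apply, Matrix.conjTranspose_apply]
  push_cast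
  rw [Finset.sum_comm]
  refine Finset.sum_congr rfl fun i _ => Finset.sum_congr rfl fun j _ => ?_
  rw [Complex.star_def, ← Complex.normSq_eq_conj_mul_self, Complex.normSq_eq_norm_sq]
  norm_cast

lemma frobSq_unitary_mul_mul_unitary {U W : Matrix (Fin n) (Fin n) ℂ}
    (hU : U ∈ unitaryGroup (Fin n) ℂ) (hW : W ∈ unitaryGroup (Fin n) ℂ)
    (M : Matrix (Fin n) (Fin n) ℂ) : frobSq (U * M * W) = frobSq M := by
  have hU' : Uᴴ * U = 1 := mem_unitaryGroup_iff'.mp hU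
  have hW' : W * Wᴴ = 1 := mem_unitaryGroup_iff.mp hW
  have htrace : ((U * M * W)ᴴ * (U * M * W)).trace = (Mᴴ * M).trace := by
    simp only [conjTranspose_mul, Matrix.mul_assoc]
    rw [← Matrix.mul_assoc Uᴴ, hU', Matrix.one_mul, trace_mul_comm, Matrix.mul_assoc,
      Matrix.mul_assoc, hW', Matrix.mul_one]
  exact_mod_cast (ofReal_frobSq _).trans (htrace.trans (ofReal_frobSq M).symm)

lemma mrpow_of_isHermitian {A : Matrix (Fin n) (Fin n) ℂ} (hA : A.IsHermitian) (t : ℝ) :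
    mrpow A t = (hA.eigenvectorUnitary : Matrix (Fin n) (Fin n) ℂ)
      * diagonal (fun i => ((hA.eigenvalues i ^ t : ℝ) : ℂ))
      * star (hA.eigenvectorUnitary : Matrix (Fin n) (Fin n) ℂ) :=
  dif_pos hA

lemma mrpow_one {A : Matrix (Fin n) (Fin n) ℂ} (hA : A.IsHermitian) : mrpow A 1 = A := by
  simp only [mrpow_of_isHermitian hA, Real.rpow_one]
  exact hA.spectral_theorem.symm

lemma mrpow_zero {A : Matrix (Fin n) (Fin n) ℂ} (hA : A.IsHermitian) : mrpow A 0 = 1 := by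
  simp [mrpow_of_isHermitian hA]

lemma star_eigenvectorUnitary_mul_mrpow_mul_mrpow_mul_apply
    {A B : Matrix (Fin n) (Fin n) ℂ} (hA : A.IsHermitian) (hB : B.IsHermitian)
    (X : Matrix (Fin n) (Fin n) ℂ) (t s : ℝ) (i j : Fin n) :
    (star (hA.eigenvectorUnitary : Matrix (Fin n) (Fin n) ℂ) * (mrpow A t * X * mrpow B s)
        * (hB.eigenvectorUnitary : Matrix (Fin n) (Fin n) ℂ)) i j
      = ((hA.eigenvalues i ^ t * hB.eigenvalues j ^ s : ℝ) : ℂ)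
        * (star (hA.eigenvectorUnitary : Matrix (Fin n) (Fin n) ℂ) * X
          * (hB.eigenvectorUnitary : Matrix (Fin n) (Fin n) ℂ)) i j := by
  set U := (hA.eigenvectorUnitary : Matrix (Fin n) (Fin n) ℂ)
  set W := (hB.eigenvectorUnitary : Matrix (Fin n) (Fin n) ℂ)
  have hU : star U * U = 1 := Unitary.coe_star_mul_self _
  have hW : star W * W = 1 := Unitary.coe_star_mul_self _
  have hconj : star U * (mrpow A t * X * mrpow B s) * W
      = (star U * U) * diagonal (fun i => ((hA.eigenvalues i ^ t : ℝ) : ℂ)) * (star U * X * W)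
        * diagonal (fun j => ((hB.eigenvalues j ^ s : ℝ) : ℂ)) * (star W * W) := by
    simp only [mrpow_of_isHermitian hA, mrpow_of_isHermitian hB, Matrix.mul_assoc]; rfl
  rw [hconj, hU, hW, Matrix.one_mul, Matrix.mul_one, mul_diagonal, diagonal_mul]
  push_cast
  ring

lemma frobSq_eq_sum_of_apply_eq {U W M Y : Matrix (Fin n) (Fin n) ℂ}
    (hU : U ∈ unitaryGroup (Fin n) ℂ) (hW : W ∈ unitaryGroup (Fin n) ℂ) (f : Fin n → Fin n → ℝ)
    (h : ∀ i j, (star U * M * W) i j = f i j * Y i j) :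
    frobSq M = ∑ i, ∑ j, f i j ^ 2 * ‖Y i j‖ ^ 2 := by
  rw [← frobSq_unitary_mul_mul_unitary (Unitary.star_mem hU) hW M, frobSq]
  simp only [h, norm_mul, Complex.norm_real, Real.norm_eq_abs, mul_pow, sq_abs]

end Matrix

theorem stmt_16_general {n : ℕ} (A B X : Matrix (Fin n) (Fin n) ℂ) (v Kmin r r1 rh1 : ℝ)
    (hA : A.PosDef) (hB : B.PosDef)
    (hK : Kmin = sInf (Set.range fun p : Fin n × Fin n =>
      Kant (Real.sqrt (hA.1.eigenvalues p.1 / hB.1.eigenvalues p.2))))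
    (hr : r = min v (1 - v)) (hr1 : r1 = min (2 * r) (1 - 2 * r))
    (hrh1 : rh1 = min (2 * r1) (1 - 2 * r1))
    (hv0 : 0 < v) (hv : v ≤ 1 / 2) :
    frobSq (((1 - v : ℝ) : ℂ) • (A * X) + ((v : ℝ) : ℂ) • (X * B))
        - v ^ 2 * frobSq (A * X - X * B) ≥
      r1 * frobSq (mrpow A (1 / 2) * X * mrpow B (1 / 2) - A * X)
        + Kmin ^ rh1 * frobSq (mrpow A (1 - v) * X * mrpow B v) := by
  rw [hr, min_eq_left (show v ≤ 1 - v by linarith)] at hr1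
  have hentry := star_eigenvectorUnitary_mul_mrpow_mul_mrpow_mul_apply hA.1 hB.1 X
  set d := hA.1.eigenvalues
  set e := hB.1.eigenvalues
  set Y := star (hA.1.eigenvectorUnitary : Matrix (Fin n) (Fin n) ℂ) * X
    * (hB.1.eigenvectorUnitary : Matrix (Fin n) (Fin n) ℂ)
  have hAX : A * X = mrpow A 1 * X * mrpow B 0 := by
    rw [mrpow_one hA.1, mrpow_zero hB.1, Matrix.mul_one]
  have hXB : X * B = mrpow A 0 * X * mrpow B 1 := by
    rw [mrpow_zero hA.1, mrpow_one hB.1, Matrix.one_mul]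
  have hfrob := fun M f => frobSq_eq_sum_of_apply_eq (M := M) (Y := Y)
    hA.1.eigenvectorUnitary.2 hB.1.eigenvectorUnitary.2 f
  rw [hfrob _ (fun i j => (1 - v) * d i + v * e j) fun i j => by
        simp only [Matrix.mul_add, Matrix.add_mul, Matrix.mul_smul, Matrix.smul_mul, hAX, hXB,
          Matrix.add_apply, Matrix.smul_apply, hentry, Real.rpow_one, Real.rpow_zero]
        push_cast; ring,
    hfrob _ (fun i j => d i - e j) fun i j => by
        simp only [Matrix.mul_sub, Matrix.sub_mul, hAX, hXB, Matrix.sub_apply, hentry,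
          Real.rpow_one, Real.rpow_zero]
        push_cast; ring,
    hfrob _ (fun i j => d i ^ (1 / 2 : ℝ) * e j ^ (1 / 2 : ℝ) - d i) fun i j => by
        simp only [Matrix.mul_sub, Matrix.sub_mul, hAX, Matrix.sub_apply, hentry,
          Real.rpow_one, Real.rpow_zero]
        push_cast; ring,
    hfrob _ (fun i j => d i ^ (1 - v) * e j ^ v) (hentry (1 - v) v)]
  have hKmin₀ : 0 ≤ Kmin := hK ▸ sInf_range_Kant_nonneg fun p =>
    Real.sqrt_pos.2 (div_pos (hA.eigenvalues_pos p.1) (hB.eigenvalues_pos p.2))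
  have hKmin_le : ∀ i j, Kmin ≤ Kant √(d i / e j) := fun i j =>
    hK ▸ csInf_le (Set.finite_range _).bddBelow ⟨(i, j), rfl⟩
  simp only [Finset.mul_sum, ← Finset.sum_sub_distrib, ← Finset.sum_add_distrib, ge_iff_le]
  gcongr with i _ j _
  linear_combination mul_le_mul_of_nonneg_right
    (Kant_rpow_mul_sq_le_sq_mean_sub_sq (hA.eigenvalues_pos i) (hB.eigenvalues_pos j) hv0.le hv
      hr1 hrh1 hKmin₀ (hKmin_le i j)) (sq_nonneg ‖Y i j‖)

theorem stmt_16 {n : ℕ} (A B X : Matrix (Fin n) (Fin n) ℂ) (v Kmin r r1 rh1 : ℝ)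
    (hn : 0 < n) (hA : A.PosDef) (hB : B.PosDef)
    (hK : Kmin = sInf (Set.range fun p : Fin n × Fin n =>
      Kant (Real.sqrt (hA.1.eigenvalues p.1 / hB.1.eigenvalues p.2))))
    (hr : r = min v (1 - v)) (hr1 : r1 = min (2 * r) (1 - 2 * r))
    (hrh1 : rh1 = min (2 * r1) (1 - 2 * r1))
    (hv0 : 0 < v) (hv : v ≤ 1 / 2) :
    frobSq (((1 - v : ℝ) : ℂ) • (A * X) + ((v : ℝ) : ℂ) • (X * B))
        - v ^ 2 * frobSq (A * X - X * B) ≥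
      r1 * frobSq (mrpow A (1 / 2) * X * mrpow B (1 / 2) - A * X)
        + Kmin ^ rh1 * frobSq (mrpow A (1 - v) * X * mrpow B v) :=
  stmt_16_general A B X v Kmin r r1 rh1 hA hB hK hr hr1 hrh1 hv0 hv
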